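/- arXiv:1806.06959 — 4 statements merged into one kernel-verified Lean document; each statement's English description precedes it below -/
import Mathlib

section
/- Let G(t,x) = (2πκt)^{-d/2} exp(-|x|²/(2κt) - λt) 1_{t>0} with κ, λ > 0, and let Δ > 0. Then there is a constant C (depending only on d, κ, λ) such that for all s > Δ, ∫_{ℝ^d} |G(s+Δ, y) - G(s, y)| dy ≤ C (Δ/s) e^{-λs/2}, and for all 0 ≤ s ≤ Δ, ∫_{ℝ^d} |G(s+Δ, y) - G(s, y)| dy ≤ 2. -/
/-!
Write `G t = e^{-λt} p_t` with `p_t` the Gaussian density of variance `κt`, so `∫ G t = e^{-λt} ≤ 1`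
and the bound `2` is the triangle inequality. For `0 < s ≤ t` both `G s` and `G t` lie below
`h = e^{λ(t-s)} (t/s)^{d/2} G t` (the Gaussian factor `e^{-|x|²/(2κs)}` increases with `s`), and
`|f - g| ≤ 2h - f - g` whenever `f, g ≤ h`. Integrating gives
`∫ |G t - G s| ≤ e^{-λs} (2((t/s)^{d/2} - 1) + 1 - e^{-λ(t-s)})`, which for `t = s + Δ`, `Δ ≤ s`
is at most `e^{-λs} (Δ/s) (2(2^d - 1) + λs)`; finally `λs e^{-λs} ≤ 2 e^{-λs/2}`.
-/

open Real MeasureTheory Module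

lemma integral_abs_sub_le_of_le {α : Type*} [MeasurableSpace α] {μ : Measure α} {f g h : α → ℝ}
    (hf : Integrable f μ) (hg : Integrable g μ) (hh : Integrable h μ)
    (hfh : f ≤ᵐ[μ] h) (hgh : g ≤ᵐ[μ] h) :
    ∫ a, |f a - g a| ∂μ ≤ 2 * ∫ a, h a ∂μ - ∫ a, f a ∂μ - ∫ a, g a ∂μ := by
  have hbound : ∀ᵐ a ∂μ, |f a - g a| ≤ 2 * h a - f a - g a := by
    filter_upwards [hfh, hgh] with a hfa hga
    rw [abs_le]
    constructor <;> linarith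
  have h2h : Integrable (fun a ↦ 2 * h a) μ := hh.const_mul 2
  have h2hf : Integrable (fun a ↦ 2 * h a - f a) μ := h2h.sub hf
  calc ∫ a, |f a - g a| ∂μ ≤ ∫ a, 2 * h a - f a - g a ∂μ :=
        integral_mono_ae (hf.sub hg).abs (h2hf.sub hg) hbound
    _ = 2 * ∫ a, h a ∂μ - ∫ a, f a ∂μ - ∫ a, g a ∂μ := by
        rw [integral_sub h2hf hg, integral_sub h2h hf, integral_const_mul]

lemma one_add_pow_le {x : ℝ} (hx₀ : 0 ≤ x) (hx₁ : x ≤ 1) (n : ℕ) :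
    (1 + x) ^ n ≤ 1 + (2 ^ n - 1) * x := by
  have h := (convexOn_pow n).2 (Set.mem_Ici.2 zero_le_one) (Set.mem_Ici.2 zero_le_two)
    (sub_nonneg.2 hx₁) hx₀ (sub_add_cancel 1 x)
  simp only [smul_eq_mul, one_pow] at h
  calc (1 + x) ^ n = ((1 - x) * 1 + x * 2) ^ n := by ring
    _ ≤ (1 - x) * 1 + x * 2 ^ n := h
    _ = 1 + (2 ^ n - 1) * x := by ring

lemma mul_exp_neg_le_two_mul_exp_neg_half (u : ℝ) : u * exp (-u) ≤ 2 * exp (-u / 2) := by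
  have h := (mul_exp_neg_le_exp_neg_one (u / 2)).trans (exp_le_one_iff.2 (by norm_num))
  calc u * exp (-u) = 2 * (u / 2 * exp (-(u / 2))) * exp (-u / 2) := by
        rw [mul_assoc, mul_assoc, ← exp_add]; ring_nf
    _ ≤ 2 * 1 * exp (-u / 2) := by gcongr
    _ = 2 * exp (-u / 2) := by ring

section Gaussian

variable {V : Type*} [NormedAddCommGroup V] [InnerProductSpace ℝ V] [FiniteDimensional ℝ V]
  [MeasurableSpace V] [BorelSpace V]

lemma integral_exp_neg_sq_norm_div {c : ℝ} (hc : 0 < c) :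
    ∫ v : V, exp (-‖v‖ ^ 2 / c) = (π * c) ^ ((finrank ℝ V : ℝ) / 2) := by
  have h := GaussianFourier.integral_rexp_neg_mul_sq_norm (V := V) (inv_pos.2 hc)
  simp only [neg_mul, div_inv_eq_mul] at h
  simpa only [neg_div, inv_mul_eq_div] using h

lemma integrable_exp_neg_sq_norm_div {c : ℝ} (hc : 0 < c) :
    Integrable (fun v : V ↦ exp (-‖v‖ ^ 2 / c)) :=
  .of_integral_ne_zero (by rw [integral_exp_neg_sq_norm_div hc]; positivity)

end Gaussian

section HeatKernel

variable {V : Type*} [NormedAddCommGroup V] [InnerProductSpace ℝ V]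

noncomputable def dampedHeatKernel (κ lam t : ℝ) (x : V) : ℝ :=
  if 0 < t then
    (2 * π * κ * t) ^ (-(finrank ℝ V : ℝ) / 2) * exp (-‖x‖ ^ 2 / (2 * κ * t) - lam * t)
  else 0

variable {κ : ℝ} (lam : ℝ)

lemma dampedHeatKernel_nonneg (hκ : 0 ≤ κ) (t : ℝ) (x : V) :
    0 ≤ dampedHeatKernel κ lam t x := by
  unfold dampedHeatKernel
  split_ifs <;> positivity

lemma dampedHeatKernel_of_pos (hκ : 0 ≤ κ) {t : ℝ} (ht : 0 < t) (x : V) :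
    dampedHeatKernel κ lam t x =
      exp (-(lam * t)) / (2 * π * κ * t) ^ ((finrank ℝ V : ℝ) / 2) *
        exp (-‖x‖ ^ 2 / (2 * κ * t)) := by
  rw [dampedHeatKernel, if_pos ht, neg_div, rpow_neg (by positivity), sub_eq_add_neg, exp_add]
  ring

lemma dampedHeatKernel_le_mul (hκ : 0 < κ) {s t : ℝ} (hs : 0 < s) (hst : s ≤ t) (x : V) :
    dampedHeatKernel κ lam s x ≤
      exp (lam * (t - s)) * (t / s) ^ ((finrank ℝ V : ℝ) / 2) * dampedHeatKernel κ lam t x := by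
  have ht : 0 < t := hs.trans_le hst
  have hscale : (t / s) ^ ((finrank ℝ V : ℝ) / 2) / (2 * π * κ * t) ^ ((finrank ℝ V : ℝ) / 2) =
      1 / (2 * π * κ * s) ^ ((finrank ℝ V : ℝ) / 2) := by
    rw [← div_rpow (by positivity) (by positivity),
      show t / s / (2 * π * κ * t) = 1 / (2 * π * κ * s) by field_simp, div_rpow zero_le_one
      (by positivity), one_rpow]
  have hexp : exp (lam * (t - s)) * exp (-(lam * t)) = exp (-(lam * s)) := by
    rw [← exp_add]; ring_nf
  have hgauss : exp (-‖x‖ ^ 2 / (2 * κ * s)) ≤ exp (-‖x‖ ^ 2 / (2 * κ * t)) := by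
    rw [neg_div, neg_div, exp_le_exp, neg_le_neg_iff]
    gcongr
  rw [dampedHeatKernel_of_pos lam hκ.le hs, dampedHeatKernel_of_pos lam hκ.le ht]
  calc exp (-(lam * s)) / (2 * π * κ * s) ^ ((finrank ℝ V : ℝ) / 2) * exp (-‖x‖ ^ 2 / (2 * κ * s))
      ≤ exp (-(lam * s)) / (2 * π * κ * s) ^ ((finrank ℝ V : ℝ) / 2) *
          exp (-‖x‖ ^ 2 / (2 * κ * t)) := mul_le_mul_of_nonneg_left hgauss (by positivity)
    _ = _ := by rw [← hexp, mul_div_assoc, ← mul_one_div, ← hscale]; ring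

variable [FiniteDimensional ℝ V] [MeasurableSpace V] [BorelSpace V]

lemma integral_dampedHeatKernel (hκ : 0 < κ) {t : ℝ} (ht : 0 < t) :
    ∫ x : V, dampedHeatKernel κ lam t x = exp (-(lam * t)) := by
  simp_rw [dampedHeatKernel_of_pos lam hκ.le ht, integral_const_mul]
  rw [integral_exp_neg_sq_norm_div (by positivity), show π * (2 * κ * t) = 2 * π * κ * t by ring,
    div_mul_cancel₀ _ (by positivity)]

lemma integrable_dampedHeatKernel (hκ : 0 < κ) (t : ℝ) :
    Integrable (dampedHeatKernel κ lam t : V → ℝ) := by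
  rcases lt_or_ge 0 t with ht | ht
  · exact .of_integral_ne_zero (by rw [integral_dampedHeatKernel lam hκ ht]; positivity)
  · have hzero : (dampedHeatKernel κ lam t : V → ℝ) = 0 := by
      funext x; simp [dampedHeatKernel, not_lt.2 ht]
    rw [hzero]
    exact integrable_zero _ _ _

lemma integral_dampedHeatKernel_le_one (hκ : 0 < κ) (hlam : 0 ≤ lam) (t : ℝ) :
    ∫ x : V, dampedHeatKernel κ lam t x ≤ 1 := by
  rcases lt_or_ge 0 t with ht | ht
  · rw [integral_dampedHeatKernel lam hκ ht, exp_le_one_iff, neg_nonpos]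
    positivity
  · simp [dampedHeatKernel, not_lt.2 ht]

lemma integral_abs_dampedHeatKernel_sub_le_two (hκ : 0 < κ) (hlam : 0 ≤ lam) (s t : ℝ) :
    ∫ x : V, |dampedHeatKernel κ lam t x - dampedHeatKernel κ lam s x| ≤ 2 := by
  have hG := integrable_dampedHeatKernel (V := V) lam hκ
  calc ∫ x : V, |dampedHeatKernel κ lam t x - dampedHeatKernel κ lam s x|
      ≤ ∫ x : V, dampedHeatKernel κ lam t x + dampedHeatKernel κ lam s x := by
        refine integral_mono ((hG t).sub (hG s)).abs ((hG t).add (hG s)) fun x ↦ ?_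
        have := dampedHeatKernel_nonneg lam hκ.le t x
        have := dampedHeatKernel_nonneg lam hκ.le s x
        exact abs_sub_le_iff.2 ⟨by linarith, by linarith⟩
    _ ≤ 2 := by
        rw [integral_add (hG t) (hG s)]
        linarith [integral_dampedHeatKernel_le_one (V := V) lam hκ hlam t,
          integral_dampedHeatKernel_le_one (V := V) lam hκ hlam s]

lemma integral_abs_dampedHeatKernel_sub_le (hκ : 0 < κ) (hlam : 0 ≤ lam) {s t : ℝ} (hs : 0 < s)
    (hst : s ≤ t) :
    ∫ x : V, |dampedHeatKernel κ lam t x - dampedHeatKernel κ lam s x| ≤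
      2 * (exp (-(lam * s)) * (t / s) ^ ((finrank ℝ V : ℝ) / 2)) - exp (-(lam * t)) -
        exp (-(lam * s)) := by
  have ht : 0 < t := hs.trans_le hst
  set c := exp (lam * (t - s)) * (t / s) ^ ((finrank ℝ V : ℝ) / 2) with hc
  have hc_one : 1 ≤ c := one_le_mul_of_one_le_of_one_le
    (one_le_exp (mul_nonneg hlam (sub_nonneg.2 hst)))
    (one_le_rpow ((one_le_div hs).2 hst) (by positivity))
  have hG := integrable_dampedHeatKernel (V := V) lam hκ
  have hdom_t : dampedHeatKernel κ lam t ≤ fun x : V ↦ c * dampedHeatKernel κ lam t x :=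
    fun x ↦ le_mul_of_one_le_left (dampedHeatKernel_nonneg lam hκ.le t x) hc_one
  have hdom_s : dampedHeatKernel κ lam s ≤ fun x : V ↦ c * dampedHeatKernel κ lam t x :=
    dampedHeatKernel_le_mul lam hκ hs hst
  have hint : ∫ x : V, c * dampedHeatKernel κ lam t x =
      exp (-(lam * s)) * (t / s) ^ ((finrank ℝ V : ℝ) / 2) := by
    rw [integral_const_mul, integral_dampedHeatKernel lam hκ ht, hc, mul_right_comm,
      ← exp_add]
    ring_nf
  have h := integral_abs_sub_le_of_le (hG t) (hG s) ((hG t).const_mul c)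
    (.of_forall hdom_t) (.of_forall hdom_s)
  rwa [hint, integral_dampedHeatKernel lam hκ ht, integral_dampedHeatKernel lam hκ hs] at h

lemma integral_abs_dampedHeatKernel_add_sub_le (hκ : 0 < κ) (hlam : 0 ≤ lam) {s Δ : ℝ}
    (hΔ : 0 < Δ) (hΔs : Δ ≤ s) :
    ∫ x : V, |dampedHeatKernel κ lam (s + Δ) x - dampedHeatKernel κ lam s x| ≤
      2 ^ (finrank ℝ V + 1) * (Δ / s) * exp (-lam * s / 2) := by
  have hs : 0 < s := hΔ.trans_le hΔs
  set n := finrank ℝ V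
  set r := Δ / s with hr
  set E := exp (-(lam * s))
  set H := exp (-lam * s / 2)
  have hr₀ : 0 ≤ r := div_nonneg hΔ.le hs.le
  have hr₁ : r ≤ 1 := (div_le_one hs).2 hΔs
  have hratio : ((s + Δ) / s) ^ ((n : ℝ) / 2) ≤ 1 + (2 ^ n - 1) * r := by
    calc ((s + Δ) / s) ^ ((n : ℝ) / 2) = (1 + r) ^ ((n : ℝ) / 2) := by
          rw [hr, add_div, div_self hs.ne']
      _ ≤ (1 + r) ^ (n : ℝ) :=
        rpow_le_rpow_of_exponent_le (by linarith) (half_le_self (by positivity))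
      _ ≤ 1 + (2 ^ n - 1) * r := by rw [rpow_natCast]; exact one_add_pow_le hr₀ hr₁ n
  have hdamp : E * (1 - lam * s * r) ≤ exp (-(lam * (s + Δ))) := by
    rw [show -(lam * (s + Δ)) = -(lam * s) + -(lam * Δ) by ring, exp_add]
    have : lam * s * r = lam * Δ := by rw [hr]; field_simp
    rw [this]
    exact mul_le_mul_of_nonneg_left (one_sub_le_exp_neg _) (exp_pos _).le
  have hEH : E ≤ H := exp_le_exp.2 (by nlinarith)
  have hdecay : lam * s * E ≤ 2 * H := by
    convert mul_exp_neg_le_two_mul_exp_neg_half (lam * s) using 3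
    ring
  calc ∫ x : V, |dampedHeatKernel κ lam (s + Δ) x - dampedHeatKernel κ lam s x|
      ≤ 2 * (E * ((s + Δ) / s) ^ ((n : ℝ) / 2)) - exp (-(lam * (s + Δ))) - E :=
        integral_abs_dampedHeatKernel_sub_le lam hκ hlam hs (by linarith)
    _ ≤ 2 * (E * (1 + (2 ^ n - 1) * r)) - E * (1 - lam * s * r) - E := by
        have := mul_le_mul_of_nonneg_left hratio (exp_pos (-(lam * s))).le
        linarith
    _ = r * (2 * (2 ^ n - 1) * E + lam * s * E) := by ring
    _ ≤ r * (2 * (2 ^ n - 1) * H + 2 * H) := by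
        have : (1 : ℝ) ≤ 2 ^ n := one_le_pow₀ one_le_two
        gcongr
    _ = 2 ^ (n + 1) * r * H := by ring

end HeatKernel

theorem stmt_7_general (d : ℕ) (κ lam : ℝ) (hκ : 0 < κ) (hlam : 0 < lam)
    (G : ℝ → EuclideanSpace ℝ (Fin d) → ℝ)
    (hG : ∀ t x, G t x = if 0 < t then
      (2 * π * κ * t) ^ (-(d : ℝ) / 2) * Real.exp (-‖x‖ ^ 2 / (2 * κ * t) - lam * t) else 0) :
    ∃ C : ℝ, 0 < C ∧ ∀ Δ : ℝ, 0 < Δ →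
      (∀ s : ℝ, Δ < s →
        ∫ y : EuclideanSpace ℝ (Fin d), |G (s + Δ) y - G s y|
          ≤ C * (Δ / s) * Real.exp (-lam * s / 2)) ∧
      (∀ s : ℝ, 0 ≤ s → s ≤ Δ →
        ∫ y : EuclideanSpace ℝ (Fin d), |G (s + Δ) y - G s y| ≤ 2) := by
  have hG_eq : G = dampedHeatKernel κ lam := by
    funext t x
    rw [hG, dampedHeatKernel, finrank_euclideanSpace_fin]
  subst hG_eq
  refine ⟨2 ^ (d + 1), by positivity, fun Δ hΔ ↦ ⟨fun s hΔs ↦ ?_, fun s _ _ ↦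
    integral_abs_dampedHeatKernel_sub_le_two lam hκ hlam.le s (s + Δ)⟩⟩
  simpa only [finrank_euclideanSpace_fin] using
    integral_abs_dampedHeatKernel_add_sub_le (V := EuclideanSpace ℝ (Fin d)) lam hκ hlam.le hΔ
      hΔs.le

theorem stmt_7 (d : ℕ) (hd : 1 ≤ d) (κ lam : ℝ) (hκ : 0 < κ) (hlam : 0 < lam)
    (G : ℝ → EuclideanSpace ℝ (Fin d) → ℝ)
    (hG : ∀ t x, G t x = if 0 < t then
      (2 * π * κ * t) ^ (-(d : ℝ) / 2) * Real.exp (-‖x‖ ^ 2 / (2 * κ * t) - lam * t) else 0) :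
    ∃ C : ℝ, 0 < C ∧ ∀ Δ : ℝ, 0 < Δ →
      (∀ s : ℝ, Δ < s →
        ∫ y : EuclideanSpace ℝ (Fin d), |G (s + Δ) y - G s y|
          ≤ C * (Δ / s) * Real.exp (-lam * s / 2)) ∧
      (∀ s : ℝ, 0 ≤ s → s ≤ Δ →
        ∫ y : EuclideanSpace ℝ (Fin d), |G (s + Δ) y - G s y| ≤ 2) :=
  stmt_7_general d κ lam hκ hlam G hG
end

section
/- Let λ, κ > 0, α ∈ (0,2), d ≥ 1, and set R(τ) = ∫_{ℝ^d} (1 - e^{-(λ + 2π²κ|ξ|²)τ}) / (λ + 2π²κ|ξ|²) · |ξ|^{α-d} dξ for τ ≥ 0. Then R(τ) = (π^{d/2-α} Γ(α/2)) / ((2κ)^{α/2} Γ(d/2) λ^{1-α/2}) · γ(1 - α/2, λτ), where γ(a,x) = ∫_0^x e^{-u}u^{a-1} du is the lower incomplete Gamma function. -/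
/-!
In polar coordinates the integral becomes `2 π^(d/2) / Γ(d/2)` times the radial integral
`∫₀^∞ y^(α-1) (1 - e^(-(λ + c y²) τ)) / (λ + c y²) dy` with `c = 2π²κ`. Writing
`(1 - e^(-a τ)) / a = ∫₀^τ e^(-a t) dt` and exchanging the order of integration, the inner
`y`-integral is the Gaussian moment `c^(-α/2) Γ(α/2) t^(-α/2) e^(-λ t) / 2`, and the substitution
`u = λ t` turns the remaining `t`-integral into `λ^(α/2 - 1) γ(1 - α/2, λ τ)`.
-/

open Real MeasureTheory Set Metric Module

lemma integral_Ioc_exp_neg_mul {a τ : ℝ} (ha : a ≠ 0) (hτ : 0 ≤ τ) :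
    ∫ t in Ioc 0 τ, exp (-a * t) = (1 - exp (-a * τ)) / a := by
  rw [← intervalIntegral.integral_of_le hτ,
    intervalIntegral.integral_comp_mul_left (fun x => exp x) (neg_ne_zero.mpr ha)]
  simp only [integral_exp, mul_zero, exp_zero, smul_eq_mul]
  field_simp
  ring

lemma integrableOn_Ioc_exp_neg_mul_mul_rpow (a τ : ℝ) {s : ℝ} (hs : -1 < s) :
    IntegrableOn (fun t => exp (-a * t) * t ^ s) (Ioc 0 τ) := by
  rcases le_total τ 0 with hτ | hτ
  · simp [Ioc_eq_empty_of_le hτ]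
  · exact (intervalIntegrable_iff_integrableOn_Ioc_of_le hτ).mp
      ((intervalIntegral.intervalIntegrable_rpow' hs).continuousOn_mul (by fun_prop))

lemma integral_Ioc_exp_neg_mul_mul_rpow {a τ : ℝ} (s : ℝ) (ha : 0 < a) (hτ : 0 ≤ τ) :
    ∫ t in Ioc 0 τ, exp (-a * t) * t ^ s =
      a ^ (-s - 1) * ∫ u in Ioc 0 (a * τ), exp (-u) * u ^ s := by
  rw [← intervalIntegral.integral_of_le hτ, ← intervalIntegral.integral_of_le (by positivity)]
  calc ∫ t in 0..τ, exp (-a * t) * t ^ s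
      = ∫ t in 0..τ, a ^ (-s) * (fun u => exp (-u) * u ^ s) (a * t) := by
        refine intervalIntegral.integral_congr fun t ht => ?_
        rw [uIcc_of_le hτ] at ht
        simp only [mul_rpow ha.le ht.1, rpow_neg ha.le]
        field_simp
    _ = a ^ (-s - 1) * ∫ u in 0..a * τ, exp (-u) * u ^ s := by
        rw [intervalIntegral.integral_const_mul,
          intervalIntegral.integral_comp_mul_left (fun u => exp (-u) * u ^ s) ha.ne',
          mul_zero, smul_eq_mul, ← mul_assoc, sub_eq_add_neg, rpow_add ha, rpow_neg_one]

lemma exp_neg_add_mul_sq_mul (a c y t : ℝ) :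
    exp (-(a + c * y ^ 2) * t) = exp (-a * t) * exp (-(c * t) * y ^ 2) := by
  rw [← exp_add]
  ring_nf

lemma integral_Ioi_rpow_mul_exp_neg_add_mul_sq_mul {a c s t : ℝ} (hc : 0 < c) (ht : 0 < t)
    (hs : -1 < s) :
    ∫ y in Ioi 0, y ^ s * exp (-(a + c * y ^ 2) * t) =
      (c * t) ^ (-(s + 1) / 2) * (1 / 2) * Gamma ((s + 1) / 2) * exp (-a * t) := by
  simp_rw [exp_neg_add_mul_sq_mul, mul_left_comm _ (exp (-a * t)), integral_const_mul,
    ← rpow_two, integral_rpow_mul_exp_neg_mul_rpow two_pos hs (mul_pos hc ht)]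
  ring

lemma integrableOn_rpow_mul_exp_neg_add_mul_sq_mul (a : ℝ) {c s t : ℝ} (hc : 0 < c)
    (ht : 0 < t) (hs : -1 < s) :
    IntegrableOn (fun y => y ^ s * exp (-(a + c * y ^ 2) * t)) (Ioi 0) := by
  simp_rw [exp_neg_add_mul_sq_mul, mul_left_comm _ (exp (-a * t))]
  exact (integrableOn_rpow_mul_exp_neg_mul_sq (mul_pos hc ht) hs).const_mul _

lemma integrable_rpow_mul_exp_neg_add_mul_sq_mul_prod {a c α : ℝ} (τ : ℝ) (hc : 0 < c)
    (hα : 0 < α) (hα2 : α < 2) :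
    Integrable (fun p : ℝ × ℝ => p.1 ^ (α - 1) * exp (-(a + c * p.1 ^ 2) * p.2))
      ((volume.restrict (Ioi 0)).prod (volume.restrict (Ioc 0 τ))) := by
  have hs : -1 < α - 1 := by linarith
  refine (integrable_prod_iff' (by fun_prop)).mpr ⟨?_, ?_⟩
  · filter_upwards [ae_restrict_mem measurableSet_Ioc] with t ht
    exact integrableOn_rpow_mul_exp_neg_add_mul_sq_mul a hc ht.1 hs
  · refine ((integrableOn_Ioc_exp_neg_mul_mul_rpow a τ (s := -(α / 2)) (by linarith)).const_mul
      (c ^ (-(α / 2)) * (1 / 2) * Gamma (α / 2))).congr ?_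
    filter_upwards [ae_restrict_mem measurableSet_Ioc] with t ht
    rw [← setIntegral_congr_fun measurableSet_Ioi fun y (hy : 0 < y) =>
        (Real.norm_of_nonneg (by positivity)).symm,
      integral_Ioi_rpow_mul_exp_neg_add_mul_sq_mul hc ht.1 hs, mul_rpow hc.le ht.1.le]
    ring_nf

theorem integral_Ioi_rpow_mul_one_sub_exp_div {a c α τ : ℝ} (ha : 0 ≤ a) (hc : 0 < c)
    (hα : 0 < α) (hα2 : α < 2) (hτ : 0 ≤ τ) :
    ∫ y in Ioi 0, y ^ (α - 1) * ((1 - exp (-(a + c * y ^ 2) * τ)) / (a + c * y ^ 2)) =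
      c ^ (-(α / 2)) * (1 / 2) * Gamma (α / 2) *
        ∫ t in Ioc 0 τ, exp (-a * t) * t ^ (-(α / 2)) := by
  calc _ = ∫ y in Ioi 0, ∫ t in Ioc 0 τ, y ^ (α - 1) * exp (-(a + c * y ^ 2) * t) := by
        refine setIntegral_congr_fun measurableSet_Ioi fun y (hy : 0 < y) => ?_
        rw [integral_const_mul, integral_Ioc_exp_neg_mul (by positivity) hτ]
    _ = ∫ t in Ioc 0 τ, ∫ y in Ioi 0, y ^ (α - 1) * exp (-(a + c * y ^ 2) * t) :=
        integral_integral_swap (integrable_rpow_mul_exp_neg_add_mul_sq_mul_prod τ hc hα hα2)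
    _ = ∫ t in Ioc 0 τ, c ^ (-(α / 2)) * (1 / 2) * Gamma (α / 2) *
          (exp (-a * t) * t ^ (-(α / 2))) := by
        refine setIntegral_congr_fun measurableSet_Ioc fun t ht => ?_
        rw [integral_Ioi_rpow_mul_exp_neg_add_mul_sq_mul hc ht.1 (by linarith),
          mul_rpow hc.le ht.1.le]
        ring_nf
    _ = _ := integral_const_mul _ _

section Polar

variable {E : Type*} [NormedAddCommGroup E] [InnerProductSpace ℝ E] [FiniteDimensional ℝ E]
  [MeasurableSpace E] [BorelSpace E] [Nontrivial E]

lemma finrank_mul_volume_real_ball_zero_one :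
    (finrank ℝ E : ℝ) * volume.real (ball (0 : E) 1) =
      2 * π ^ ((finrank ℝ E : ℝ) / 2) / Gamma ((finrank ℝ E : ℝ) / 2) := by
  have hn : (0 : ℝ) < finrank ℝ E := mod_cast finrank_pos
  rw [measureReal_def, InnerProductSpace.volume_ball, ENNReal.ofReal_one, one_pow, one_mul,
    ENNReal.toReal_ofReal (by positivity), Gamma_add_one (by positivity), sqrt_eq_rpow,
    ← rpow_natCast, ← rpow_mul pi_pos.le]
  field_simp

lemma integral_fun_norm_mul_norm_rpow (f : ℝ → ℝ) (β : ℝ) :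
    ∫ x : E, f ‖x‖ * ‖x‖ ^ (β - finrank ℝ E) =
      2 * π ^ ((finrank ℝ E : ℝ) / 2) / Gamma ((finrank ℝ E : ℝ) / 2) *
        ∫ y in Ioi 0, y ^ (β - 1) * f y := by
  rw [integral_fun_norm_addHaar volume (fun r => f r * r ^ (β - finrank ℝ E)), nsmul_eq_mul,
    smul_eq_mul, ← mul_assoc, finrank_mul_volume_real_ball_zero_one]
  congr 1
  refine setIntegral_congr_fun measurableSet_Ioi fun y (hy : 0 < y) => ?_
  rw [smul_eq_mul, ← rpow_natCast, Nat.cast_sub finrank_pos, Nat.cast_one, mul_left_comm,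
    ← rpow_add hy]
  ring_nf

end Polar

theorem stmt_11 (d : ℕ) (hd : 1 ≤ d) (α κ lam : ℝ) (hκ : 0 < κ) (hlam : 0 < lam)
    (hα : 0 < α) (hα2 : α < 2) :
    ∀ τ : ℝ, 0 ≤ τ →
      ∫ ξ : EuclideanSpace ℝ (Fin d),
          (1 - Real.exp (-(lam + 2 * π ^ 2 * κ * ‖ξ‖ ^ 2) * τ))
            / (lam + 2 * π ^ 2 * κ * ‖ξ‖ ^ 2) * ‖ξ‖ ^ (α - (d : ℝ))
        = (π ^ ((d : ℝ) / 2 - α) * Real.Gamma (α / 2))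
            / ((2 * κ) ^ (α / 2) * Real.Gamma ((d : ℝ) / 2) * lam ^ (1 - α / 2))
            * ∫ u in Set.Ioc (0 : ℝ) (lam * τ), Real.exp (-u) * u ^ ((1 - α / 2) - 1) := by
  intro τ hτ
  have : Nonempty (Fin d) := ⟨⟨0, hd⟩⟩
  have polar := integral_fun_norm_mul_norm_rpow (E := EuclideanSpace ℝ (Fin d))
    (fun r => (1 - exp (-(lam + 2 * π ^ 2 * κ * r ^ 2) * τ)) / (lam + 2 * π ^ 2 * κ * r ^ 2)) α
  rw [finrank_euclideanSpace_fin] at polar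
  rw [polar, integral_Ioi_rpow_mul_one_sub_exp_div hlam.le (by positivity) hα hα2 hτ,
    integral_Ioc_exp_neg_mul_mul_rpow _ hlam hτ, show 1 - α / 2 - 1 = -(α / 2) by ring]
  have hc : (2 * π ^ 2 * κ) ^ (-(α / 2)) = ((2 * κ) ^ (α / 2) * π ^ α)⁻¹ := by
    rw [show 2 * π ^ 2 * κ = 2 * κ * π ^ (2 : ℝ) by norm_cast; ring, rpow_neg (by positivity),
      mul_rpow (by positivity) (by positivity), ← rpow_mul pi_pos.le]
    ring_nf
  have hlam' : lam ^ (-(-(α / 2)) - 1) = (lam ^ (1 - α / 2))⁻¹ := by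
    rw [← rpow_neg hlam.le]
    ring_nf
  have hπ : π ^ ((d : ℝ) / 2) = π ^ ((d : ℝ) / 2 - α) * π ^ α := by
    rw [← rpow_add pi_pos]
    ring_nf
  rw [hc, hlam', hπ]
  field_simp
end

section
/- Let f: ℝ → ℝ be continuously differentiable with |f(z)| ≤ K(1 + |z|^p) and |f'(z)| ≤ K(1 + |z|^{p-1}) for some p ≥ 2. For x, y ∈ ℝ define ρ̃_f(x,y) = Cov(f(xU + yW), f(xV + yW)) where U, V, W are independent standard normal random variables. Then |∂ρ̃_f/∂x (x,y)| ≤ C(1 + |x|^{2p-1} + |y|^{2p-1}) and |∂ρ̃_f/∂y (x,y)| ≤ C(1 + |x|^{2p-1} + |y|^{2p-1}) for a constant C depending only on K and p. -/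
/-!
Differentiate under the integral sign: the growth bounds on `f` and `f'`, together with the
finite moments of Gaussian measures, give an integrable dominating function. Since
`|xu + yw| + 1 ≤ (1 + |x| + |y|)(1 + ‖q‖)` for `q = (u, v, w)`, each term of
`∂ₓρ̃ = E[f'(xU + yW) U f(xV + yW) + f(xU + yW) f'(xV + yW) V] - 2 E[f'(xU + yW) U] E[f(xU + yW)]`
(and likewise for `∂ᵧρ̃`) contains one factor `f'`, of growth order `p - 1`, and one factor `f`,
of order `p`, so it is at most `K² (1 + |x| + |y|)^(2p - 1)` times a Gaussian moment.
-/

open MeasureTheory ProbabilityTheory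

/-- `Cov(f(xU + yW), f(xV + yW))` for independent standard normal `U, V, W`. -/
noncomputable def rhoTilde (f : ℝ → ℝ) (x y : ℝ) : ℝ :=
  (∫ q : ℝ × ℝ × ℝ, f (x * q.1 + y * q.2.2) * f (x * q.2.1 + y * q.2.2)
      ∂((gaussianReal 0 1).prod ((gaussianReal 0 1).prod (gaussianReal 0 1)))) -
  (∫ q : ℝ × ℝ, f (x * q.1 + y * q.2) ∂((gaussianReal 0 1).prod (gaussianReal 0 1))) *
  (∫ q : ℝ × ℝ, f (x * q.1 + y * q.2) ∂((gaussianReal 0 1).prod (gaussianReal 0 1)))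

lemma abs_le_mul_one_add_abs_rpow {g : ℝ → ℝ} {K p : ℝ} (hp : 1 ≤ p)
    (hg : ∀ z, |g z| ≤ K * (1 + |z| ^ p)) (z : ℝ) : |g z| ≤ K * (1 + |z|) ^ p := by
  have hK : 0 ≤ K := nonneg_of_mul_nonneg_left ((abs_nonneg _).trans (hg 0)) (by positivity)
  calc |g z| ≤ K * (1 + |z| ^ p) := hg z
    _ ≤ K * (1 + |z|) ^ p := by
      gcongr
      simpa using Real.add_rpow_le_rpow_add zero_le_one (abs_nonneg z) hp

lemma one_add_add_rpow_le {x y r : ℝ} (hx : 0 ≤ x) (hy : 0 ≤ y) (hr : 1 ≤ r) :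
    (1 + x + y) ^ r ≤ 3 ^ (r - 1) * (1 + x ^ r + y ^ r) := by
  have := Real.rpow_sum_le_const_mul_sum_rpow_of_nonneg Finset.univ (f := ![1, x, y]) hr
    (by simp [Fin.forall_fin_succ, hx, hy])
  simpa [Fin.sum_univ_three, add_assoc] using this

lemma abs_mul_le_abs_mul_of_abs_le {c u n : ℝ} (h : |u| ≤ n) : |c * u| ≤ |c| * n := by
  rw [abs_mul]
  exact mul_le_mul_of_nonneg_left h (abs_nonneg c)

lemma one_add_abs_mul_add_le {t T u v B n : ℝ} (ht : |t| ≤ T) (hu : |u| ≤ n)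
    (hv : |v| ≤ B * n) (hB : 0 ≤ B) : 1 + |t * u + v| ≤ (1 + T + B) * (1 + n) := by
  have hn : 0 ≤ n := (abs_nonneg u).trans hu
  have hT : 0 ≤ T := (abs_nonneg t).trans ht
  calc 1 + |t * u + v| ≤ 1 + |t| * |u| + |v| := by
        rw [← abs_mul]; linarith [abs_add_le (t * u) v]
    _ ≤ 1 + T * n + B * n := by gcongr
    _ ≤ (1 + T + B) * (1 + n) := by nlinarith

lemma abs_mul_le_of_le_rpow_mul_rpow {x y K L S N a b c d : ℝ} (hS : 0 < S) (hN : 0 < N)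
    (hx : |x| ≤ K * S ^ a * N ^ b) (hy : |y| ≤ L * S ^ c * N ^ d) :
    |x * y| ≤ K * L * S ^ (a + c) * N ^ (b + d) := by
  rw [abs_mul, Real.rpow_add hS, Real.rpow_add hN]
  calc |x| * |y| ≤ (K * S ^ a * N ^ b) * (L * S ^ c * N ^ d) :=
        mul_le_mul hx hy (abs_nonneg y) ((abs_nonneg x).trans hx)
    _ = _ := by ring

section AffineArgument

variable {g : ℝ → ℝ} {K s t T u v B n : ℝ}

lemma abs_comp_mul_add_le (hg : ∀ z, |g z| ≤ K * (1 + |z|) ^ s) (hs : 0 ≤ s)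
    (ht : |t| ≤ T) (hu : |u| ≤ n) (hv : |v| ≤ B * n) (hB : 0 ≤ B) :
    |g (t * u + v)| ≤ K * (1 + T + B) ^ s * (1 + n) ^ s := by
  have hK : 0 ≤ K := nonneg_of_mul_nonneg_left ((abs_nonneg _).trans (hg 0)) (by positivity)
  have hn : 0 ≤ n := (abs_nonneg u).trans hu
  have hT : 0 ≤ T := (abs_nonneg t).trans ht
  calc |g (t * u + v)| ≤ K * (1 + |t * u + v|) ^ s := hg _
    _ ≤ K * ((1 + T + B) * (1 + n)) ^ s := by
      gcongr
      exact one_add_abs_mul_add_le ht hu hv hB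
    _ = K * (1 + T + B) ^ s * (1 + n) ^ s := by
      rw [Real.mul_rpow (by positivity) (by positivity), mul_assoc]

lemma abs_comp_mul_add_mul_le (hg : ∀ z, |g z| ≤ K * (1 + |z|) ^ (s - 1)) (hs : 1 ≤ s)
    (ht : |t| ≤ T) (hu : |u| ≤ n) (hv : |v| ≤ B * n) (hB : 0 ≤ B) :
    |g (t * u + v) * u| ≤ K * (1 + T + B) ^ (s - 1) * (1 + n) ^ s := by
  have hN : 0 < 1 + n := by linarith [(abs_nonneg u).trans hu]
  have hg_le := abs_comp_mul_add_le hg (by linarith) ht hu hv hB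
  calc |g (t * u + v) * u| = |g (t * u + v)| * |u| := abs_mul _ _
    _ ≤ (K * (1 + T + B) ^ (s - 1) * (1 + n) ^ (s - 1)) * (1 + n) :=
      mul_le_mul hg_le (by linarith) (abs_nonneg u) ((abs_nonneg _).trans hg_le)
    _ = K * (1 + T + B) ^ (s - 1) * (1 + n) ^ s := by
      rw [mul_assoc, ← Real.rpow_add_one hN.ne', sub_add_cancel]

end AffineArgument

section AffineProduct

variable {f : ℝ → ℝ} {K p t T u₁ v₁ u₂ v₂ B n : ℝ}

lemma abs_comp_mul_add_mul_comp_le (hf : ∀ z, |f z| ≤ K * (1 + |z|) ^ p) (hp : 0 ≤ p)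
    (ht : |t| ≤ T) (hu₁ : |u₁| ≤ n) (hv₁ : |v₁| ≤ B * n) (hu₂ : |u₂| ≤ n) (hv₂ : |v₂| ≤ B * n)
    (hB : 0 ≤ B) :
    |f (t * u₁ + v₁) * f (t * u₂ + v₂)| ≤ K ^ 2 * (1 + T + B) ^ (2 * p) * (1 + n) ^ (2 * p) := by
  have hN : 0 < 1 + n := by linarith [(abs_nonneg u₁).trans hu₁]
  have hT : 0 < 1 + T + B := by linarith [(abs_nonneg t).trans ht]
  simpa [two_mul, sq] using abs_mul_le_of_le_rpow_mul_rpow hT hN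
    (abs_comp_mul_add_le hf hp ht hu₁ hv₁ hB) (abs_comp_mul_add_le hf hp ht hu₂ hv₂ hB)

lemma abs_deriv_comp_mul_add_mul_mul_comp_le (hf : ∀ z, |f z| ≤ K * (1 + |z|) ^ p)
    (hf' : ∀ z, |deriv f z| ≤ K * (1 + |z|) ^ (p - 1)) (hp : 1 ≤ p)
    (ht : |t| ≤ T) (hu₁ : |u₁| ≤ n) (hv₁ : |v₁| ≤ B * n) (hu₂ : |u₂| ≤ n) (hv₂ : |v₂| ≤ B * n)
    (hB : 0 ≤ B) :
    |deriv f (t * u₁ + v₁) * u₁ * f (t * u₂ + v₂)| ≤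
      K ^ 2 * (1 + T + B) ^ (2 * p - 1) * (1 + n) ^ (2 * p) := by
  have hN : 0 < 1 + n := by linarith [(abs_nonneg u₁).trans hu₁]
  have hT : 0 < 1 + T + B := by linarith [(abs_nonneg t).trans ht]
  have := abs_mul_le_of_le_rpow_mul_rpow hT hN (abs_comp_mul_add_mul_le hf' hp ht hu₁ hv₁ hB)
    (abs_comp_mul_add_le hf (by linarith) ht hu₂ hv₂ hB)
  rwa [← sq, show p - 1 + p = 2 * p - 1 by ring, ← two_mul] at this

lemma abs_deriv_comp_mul_add_mul_comp_mul_add_le (hf : ∀ z, |f z| ≤ K * (1 + |z|) ^ p)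
    (hf' : ∀ z, |deriv f z| ≤ K * (1 + |z|) ^ (p - 1)) (hp : 1 ≤ p)
    (ht : |t| ≤ T) (hu₁ : |u₁| ≤ n) (hv₁ : |v₁| ≤ B * n) (hu₂ : |u₂| ≤ n) (hv₂ : |v₂| ≤ B * n)
    (hB : 0 ≤ B) :
    |deriv f (t * u₁ + v₁) * u₁ * f (t * u₂ + v₂) + f (t * u₁ + v₁) * (deriv f (t * u₂ + v₂) * u₂)|
      ≤ 2 * K ^ 2 * (1 + T + B) ^ (2 * p - 1) * (1 + n) ^ (2 * p) := by
  have h₁ := abs_deriv_comp_mul_add_mul_mul_comp_le hf hf' hp ht hu₁ hv₁ hu₂ hv₂ hB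
  have h₂ := abs_deriv_comp_mul_add_mul_mul_comp_le hf hf' hp ht hu₂ hv₂ hu₁ hv₁ hB
  rw [mul_comm] at h₂
  exact (abs_add_le _ _).trans (by linarith)

end AffineProduct

lemma hasDerivAt_comp_mul_add {f : ℝ → ℝ} (hf : Differentiable ℝ f) (u v s : ℝ) :
    HasDerivAt (fun s => f (s * u + v)) (deriv f (s * u + v) * u) s :=
  (hf _).hasDerivAt.comp s ((hasDerivAt_mul_const u).add_const v)

lemma abs_integral_le_mul_integral {Ω : Type*} [MeasurableSpace Ω] {μ : Measure Ω}
    {F G : Ω → ℝ} {C : ℝ} (hG : Integrable G μ) (h : ∀ ω, |F ω| ≤ C * G ω) :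
    |∫ ω, F ω ∂μ| ≤ C * ∫ ω, G ω ∂μ := by
  simpa [integral_const_mul] using
    norm_integral_le_of_norm_le (f := F) (hG.const_mul C) (ae_of_all _ h)

lemma IsGaussian.integrable_one_add_norm_rpow {E : Type*} [NormedAddCommGroup E]
    [NormedSpace ℝ E] [MeasurableSpace E] [BorelSpace E] [CompleteSpace E]
    [SecondCountableTopology E] (μ : Measure E) [IsGaussian μ] {r : ℝ} (hr : 0 ≤ r) :
    Integrable (fun x => (1 + ‖x‖) ^ r) μ := by
  have := ((memLp_const (1 : ℝ)).add
    (IsGaussian.memLp_id μ (ENNReal.ofReal r) ENNReal.ofReal_ne_top).norm).integrable_norm_rpow'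
  refine this.congr (ae_of_all _ fun x => ?_)
  simp only [Pi.add_apply, id, ENNReal.toReal_ofReal hr]
  rw [Real.norm_of_nonneg (by positivity)]

section DifferentiationUnderIntegral

variable {E F : Type*} [NormedAddCommGroup E] [MeasurableSpace E] [NormedAddCommGroup F]
  [MeasurableSpace F] {μ : Measure E} {ν : Measure F} {f : ℝ → ℝ} {K p B : ℝ}

theorem hasDerivAt_integral_comp_mul_add (hf : ContDiff ℝ 1 f)
    (hf_le : ∀ z, |f z| ≤ K * (1 + |z|) ^ p) (hf'_le : ∀ z, |deriv f z| ≤ K * (1 + |z|) ^ (p - 1))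
    (hp : 1 ≤ p) {a b : E → ℝ} (ha : Measurable a) (hb : Measurable b)
    (ha_le : ∀ ω, |a ω| ≤ ‖ω‖) (hb_le : ∀ ω, |b ω| ≤ B * ‖ω‖) (hB : 0 ≤ B)
    (hμ : Integrable (fun ω => (1 + ‖ω‖) ^ p) μ) (t : ℝ) :
    HasDerivAt (fun t => ∫ ω, f (t * a ω + b ω) ∂μ)
      (∫ ω, deriv f (t * a ω + b ω) * a ω ∂μ) t := by
  have hmeas (s : ℝ) : Measurable fun ω => s * a ω + b ω := (ha.const_mul s).add hb
  refine (hasDerivAt_integral_of_dominated_loc_of_deriv_le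
    (bound := fun ω => K * (1 + (|t| + 1) + B) ^ (p - 1) * (1 + ‖ω‖) ^ p)
    (Metric.closedBall_mem_nhds t one_pos)
    (.of_forall fun s => (hf.continuous.measurable.comp (hmeas s)).aestronglyMeasurable)
    ((hμ.const_mul (K * (1 + |t| + B) ^ p)).mono'
      (hf.continuous.measurable.comp (hmeas t)).aestronglyMeasurable
      (ae_of_all _ fun ω => abs_comp_mul_add_le hf_le (by linarith) le_rfl (ha_le ω) (hb_le ω) hB))
    (((hf.continuous_deriv le_rfl).measurable.comp (hmeas t)).mul ha).aestronglyMeasurable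
    (ae_of_all _ fun ω s hs => abs_comp_mul_add_mul_le hf'_le hp (norm_le_of_mem_closedBall hs)
      (ha_le ω) (hb_le ω) hB)
    (hμ.const_mul _)
    (ae_of_all _ fun ω s _ =>
      hasDerivAt_comp_mul_add (hf.differentiable one_ne_zero) (a ω) (b ω) s)).2

theorem hasDerivAt_integral_comp_mul_add_mul_comp_mul_add (hf : ContDiff ℝ 1 f)
    (hf_le : ∀ z, |f z| ≤ K * (1 + |z|) ^ p) (hf'_le : ∀ z, |deriv f z| ≤ K * (1 + |z|) ^ (p - 1))
    (hp : 1 ≤ p) {a₁ b₁ a₂ b₂ : E → ℝ} (ha₁ : Measurable a₁) (hb₁ : Measurable b₁)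
    (ha₂ : Measurable a₂) (hb₂ : Measurable b₂)
    (ha₁_le : ∀ ω, |a₁ ω| ≤ ‖ω‖) (hb₁_le : ∀ ω, |b₁ ω| ≤ B * ‖ω‖)
    (ha₂_le : ∀ ω, |a₂ ω| ≤ ‖ω‖) (hb₂_le : ∀ ω, |b₂ ω| ≤ B * ‖ω‖) (hB : 0 ≤ B)
    (hμ : Integrable (fun ω => (1 + ‖ω‖) ^ (2 * p)) μ) (t : ℝ) :
    HasDerivAt (fun t => ∫ ω, f (t * a₁ ω + b₁ ω) * f (t * a₂ ω + b₂ ω) ∂μ)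
      (∫ ω, deriv f (t * a₁ ω + b₁ ω) * a₁ ω * f (t * a₂ ω + b₂ ω) +
        f (t * a₁ ω + b₁ ω) * (deriv f (t * a₂ ω + b₂ ω) * a₂ ω) ∂μ) t := by
  have hf_meas := hf.continuous.measurable
  have hf'_meas := (hf.continuous_deriv le_rfl).measurable
  have hmeas₁ (s : ℝ) : Measurable fun ω => s * a₁ ω + b₁ ω := (ha₁.const_mul s).add hb₁
  have hmeas₂ (s : ℝ) : Measurable fun ω => s * a₂ ω + b₂ ω := (ha₂.const_mul s).add hb₂
  refine (hasDerivAt_integral_of_dominated_loc_of_deriv_le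
    (F' := fun s ω => deriv f (s * a₁ ω + b₁ ω) * a₁ ω * f (s * a₂ ω + b₂ ω) +
      f (s * a₁ ω + b₁ ω) * (deriv f (s * a₂ ω + b₂ ω) * a₂ ω))
    (bound := fun ω => 2 * K ^ 2 * (1 + (|t| + 1) + B) ^ (2 * p - 1) * (1 + ‖ω‖) ^ (2 * p))
    (Metric.closedBall_mem_nhds t one_pos)
    (.of_forall fun s =>
      ((hf_meas.comp (hmeas₁ s)).mul (hf_meas.comp (hmeas₂ s))).aestronglyMeasurable)
    ((hμ.const_mul (K ^ 2 * (1 + |t| + B) ^ (2 * p))).mono'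
      ((hf_meas.comp (hmeas₁ t)).mul (hf_meas.comp (hmeas₂ t))).aestronglyMeasurable
      (ae_of_all _ fun ω => abs_comp_mul_add_mul_comp_le hf_le (by linarith) le_rfl (ha₁_le ω)
        (hb₁_le ω) (ha₂_le ω) (hb₂_le ω) hB))
    ((((hf'_meas.comp (hmeas₁ t)).mul ha₁).mul (hf_meas.comp (hmeas₂ t))).add
      ((hf_meas.comp (hmeas₁ t)).mul ((hf'_meas.comp (hmeas₂ t)).mul ha₂))).aestronglyMeasurable
    (ae_of_all _ fun ω s hs => abs_deriv_comp_mul_add_mul_comp_mul_add_le hf_le hf'_le hp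
      (norm_le_of_mem_closedBall hs) (ha₁_le ω) (hb₁_le ω) (ha₂_le ω) (hb₂_le ω) hB)
    (hμ.const_mul _) (ae_of_all _ fun ω s _ => ?_)).2
  have hf_diff := hf.differentiable one_ne_zero
  exact (hasDerivAt_comp_mul_add hf_diff _ _ s).mul (hasDerivAt_comp_mul_add hf_diff _ _ s)

theorem abs_deriv_integral_sub_mul_self_le (hf : ContDiff ℝ 1 f)
    (hf_le : ∀ z, |f z| ≤ K * (1 + |z|) ^ p) (hf'_le : ∀ z, |deriv f z| ≤ K * (1 + |z|) ^ (p - 1))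
    (hp : 1 ≤ p) {a₁ b₁ a₂ b₂ : E → ℝ} (ha₁ : Measurable a₁) (hb₁ : Measurable b₁)
    (ha₂ : Measurable a₂) (hb₂ : Measurable b₂)
    (ha₁_le : ∀ ω, |a₁ ω| ≤ ‖ω‖) (hb₁_le : ∀ ω, |b₁ ω| ≤ B * ‖ω‖)
    (ha₂_le : ∀ ω, |a₂ ω| ≤ ‖ω‖) (hb₂_le : ∀ ω, |b₂ ω| ≤ B * ‖ω‖)
    {a b : F → ℝ} (ha : Measurable a) (hb : Measurable b)
    (ha_le : ∀ ω, |a ω| ≤ ‖ω‖) (hb_le : ∀ ω, |b ω| ≤ B * ‖ω‖) (hB : 0 ≤ B)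
    (hμ : Integrable (fun ω => (1 + ‖ω‖) ^ (2 * p)) μ)
    (hν : Integrable (fun ω => (1 + ‖ω‖) ^ p) ν) (t : ℝ) :
    |deriv (fun t => (∫ ω, f (t * a₁ ω + b₁ ω) * f (t * a₂ ω + b₂ ω) ∂μ) -
        (∫ ω, f (t * a ω + b ω) ∂ν) * ∫ ω, f (t * a ω + b ω) ∂ν) t| ≤
      2 * K ^ 2 * ((∫ ω, (1 + ‖ω‖) ^ (2 * p) ∂μ) + (∫ ω, (1 + ‖ω‖) ^ p ∂ν) ^ 2) *
        (1 + |t| + B) ^ (2 * p - 1) := by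
  have hdJ := hasDerivAt_integral_comp_mul_add hf hf_le hf'_le hp ha hb ha_le hb_le hB hν t
  have hdI := hasDerivAt_integral_comp_mul_add_mul_comp_mul_add hf hf_le hf'_le hp ha₁ hb₁ ha₂ hb₂
    ha₁_le hb₁_le ha₂_le hb₂_le hB hμ t
  have hderiv : HasDerivAt (fun t => (∫ ω, f (t * a₁ ω + b₁ ω) * f (t * a₂ ω + b₂ ω) ∂μ) -
      (∫ ω, f (t * a ω + b ω) ∂ν) * ∫ ω, f (t * a ω + b ω) ∂ν) _ t := hdI.sub (hdJ.mul hdJ)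
  rw [hderiv.deriv]
  have hI_le := abs_integral_le_mul_integral hμ fun ω =>
    abs_deriv_comp_mul_add_mul_comp_mul_add_le hf_le hf'_le hp (le_refl |t|) (ha₁_le ω) (hb₁_le ω)
      (ha₂_le ω) (hb₂_le ω) hB
  have hJ_le := abs_integral_le_mul_integral hν fun ω =>
    abs_comp_mul_add_le hf_le (by linarith) (le_refl |t|) (ha_le ω) (hb_le ω) hB
  have hJ'_le := abs_integral_le_mul_integral hν fun ω =>
    abs_comp_mul_add_mul_le hf'_le hp (le_refl |t|) (ha_le ω) (hb_le ω) hB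
  set S := 1 + |t| + B
  set M₂ := ∫ ω, (1 + ‖ω‖) ^ p ∂ν
  set I := ∫ ω, deriv f (t * a₁ ω + b₁ ω) * a₁ ω * f (t * a₂ ω + b₂ ω) +
    f (t * a₁ ω + b₁ ω) * (deriv f (t * a₂ ω + b₂ ω) * a₂ ω) ∂μ
  set J := ∫ ω, f (t * a ω + b ω) ∂ν
  set J' := ∫ ω, deriv f (t * a ω + b ω) * a ω ∂ν
  have hJJ : |J| * |J'| ≤ K ^ 2 * S ^ (2 * p - 1) * M₂ ^ 2 := by
    calc |J| * |J'| ≤ (K * S ^ p * M₂) * (K * S ^ (p - 1) * M₂) :=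
          mul_le_mul hJ_le hJ'_le (abs_nonneg _) ((abs_nonneg _).trans hJ_le)
      _ = K ^ 2 * (S ^ p * S ^ (p - 1)) * M₂ ^ 2 := by ring
      _ = K ^ 2 * S ^ (2 * p - 1) * M₂ ^ 2 := by
        rw [← Real.rpow_add (by positivity), show p + (p - 1) = 2 * p - 1 by ring]
  calc |I - (J' * J + J * J')| ≤ |I| + (|J| * |J'| + |J| * |J'|) := by
        have := abs_add_le (J' * J) (J * J')
        rw [abs_mul, abs_mul] at this
        linarith [abs_sub I (J' * J + J * J')]
    _ ≤ _ := by linarith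

end DifferentiationUnderIntegral

theorem exists_abs_deriv_rhoTilde_le (K p : ℝ) (hp : 1 ≤ p) :
    ∃ C : ℝ, 0 ≤ C ∧ ∀ f : ℝ → ℝ, ContDiff ℝ 1 f →
      (∀ z, |f z| ≤ K * (1 + |z|) ^ p) →
      (∀ z, |deriv f z| ≤ K * (1 + |z|) ^ (p - 1)) →
      ∀ x y : ℝ,
        |deriv (fun x' => rhoTilde f x' y) x| ≤ C * (1 + |x| + |y|) ^ (2 * p - 1) ∧
        |deriv (fun y' => rhoTilde f x y') y| ≤ C * (1 + |x| + |y|) ^ (2 * p - 1) := by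
  set γ := gaussianReal 0 1
  have hμ := IsGaussian.integrable_one_add_norm_rpow (γ.prod (γ.prod γ)) (r := 2 * p)
    (by linarith)
  have hν := IsGaussian.integrable_one_add_norm_rpow (γ.prod γ) (r := p) (by linarith)
  have h₁ (q : ℝ × ℝ × ℝ) : |q.1| ≤ ‖q‖ := norm_fst_le q
  have h₂ (q : ℝ × ℝ × ℝ) : |q.2.1| ≤ ‖q‖ := (norm_fst_le q.2).trans (norm_snd_le q)
  have h₃ (q : ℝ × ℝ × ℝ) : |q.2.2| ≤ ‖q‖ := (norm_snd_le q.2).trans (norm_snd_le q)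
  refine ⟨2 * K ^ 2 * ((∫ q, (1 + ‖q‖) ^ (2 * p) ∂(γ.prod (γ.prod γ))) +
    (∫ r, (1 + ‖r‖) ^ p ∂(γ.prod γ)) ^ 2), ?_, fun f hf hf_le hf'_le x y => ⟨?_, ?_⟩⟩
  · have : 0 ≤ ∫ q, (1 + ‖q‖) ^ (2 * p) ∂(γ.prod (γ.prod γ)) :=
      integral_nonneg fun q => by positivity
    positivity
  · exact abs_deriv_integral_sub_mul_self_le hf hf_le hf'_le hp measurable_fst
      ((measurable_snd.comp measurable_snd).const_mul y) (measurable_fst.comp measurable_snd)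
      ((measurable_snd.comp measurable_snd).const_mul y) h₁
      (fun q => abs_mul_le_abs_mul_of_abs_le (h₃ q)) h₂
      (fun q => abs_mul_le_abs_mul_of_abs_le (h₃ q)) measurable_fst
      (measurable_snd.const_mul y) norm_fst_le
      (fun r => abs_mul_le_abs_mul_of_abs_le (norm_snd_le r)) (abs_nonneg y) hμ hν x
  · have h : (fun y' => rhoTilde f x y') = fun y' =>
        (∫ q, f (y' * q.2.2 + x * q.1) * f (y' * q.2.2 + x * q.2.1) ∂(γ.prod (γ.prod γ))) -
          (∫ r, f (y' * r.2 + x * r.1) ∂(γ.prod γ)) * ∫ r, f (y' * r.2 + x * r.1) ∂(γ.prod γ) := by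
      funext y'
      simp only [rhoTilde, add_comm (x * _)]
      rfl
    rw [h, add_right_comm 1 |x| |y|]
    exact abs_deriv_integral_sub_mul_self_le hf hf_le hf'_le hp
      (measurable_snd.comp measurable_snd) (measurable_fst.const_mul x)
      (measurable_snd.comp measurable_snd) ((measurable_fst.comp measurable_snd).const_mul x) h₃
      (fun q => abs_mul_le_abs_mul_of_abs_le (h₁ q)) h₃
      (fun q => abs_mul_le_abs_mul_of_abs_le (h₂ q)) measurable_snd
      (measurable_fst.const_mul x) norm_snd_le
      (fun r => abs_mul_le_abs_mul_of_abs_le (norm_fst_le r)) (abs_nonneg x) hμ hν y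

theorem stmt_13 (p K : ℝ) (hp : 2 ≤ p) :
    ∃ C : ℝ, ∀ f : ℝ → ℝ, ContDiff ℝ 1 f →
      (∀ z, |f z| ≤ K * (1 + |z| ^ p)) →
      (∀ z, |deriv f z| ≤ K * (1 + |z| ^ (p - 1))) →
      ∀ x y : ℝ,
        |deriv (fun x' => rhoTilde f x' y) x| ≤ C * (1 + |x| ^ (2 * p - 1) + |y| ^ (2 * p - 1)) ∧
        |deriv (fun y' => rhoTilde f x y') y| ≤ C * (1 + |x| ^ (2 * p - 1) + |y| ^ (2 * p - 1)) := by
  obtain ⟨C, hC₀, hC⟩ := exists_abs_deriv_rhoTilde_le K p (by linarith)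
  refine ⟨C * 3 ^ (2 * p - 2), fun f hf hf_le hf'_le x y => ?_⟩
  obtain ⟨hx, hy⟩ := hC f hf (abs_le_mul_one_add_abs_rpow (by linarith) hf_le)
    (abs_le_mul_one_add_abs_rpow (by linarith) hf'_le) x y
  have hpow : C * (1 + |x| + |y|) ^ (2 * p - 1) ≤
      C * 3 ^ (2 * p - 2) * (1 + |x| ^ (2 * p - 1) + |y| ^ (2 * p - 1)) := by
    rw [mul_assoc, show 2 * p - 2 = 2 * p - 1 - 1 by ring]
    exact mul_le_mul_of_nonneg_left
      (one_add_add_rpow_le (abs_nonneg x) (abs_nonneg y) (by linarith)) hC₀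
  exact ⟨hx.trans hpow, hy.trans hpow⟩
end

section
/- Let f: ℝ → ℝ be continuously differentiable with |f(z)| ≤ K(1+|z|^p) and |f'(z)| ≤ K(1+|z|^{p-1}) for some p ≥ 2. For v ≥ 0 and c ∈ [0,v] define ρ_f(v,c) = Cov(f(X), f(Y)), where (X,Y) is centered bivariate Gaussian with Var(X) = Var(Y) = v and Cov(X,Y) = c. Then for all v, v' ≥ 0, c ∈ [0,v], c' ∈ [0,v'], |ρ_f(v,c) − ρ_f(v',c')| ≤ C (1 + v^{p-1/2} + v'^{p-1/2}) (√|v−v'| + √|c−c'|), with C depending only on K and p. -/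
/-!
Write `X = √(v - c) U + √c W` and `Y = √(v - c) V + √c W`. Then `ρ_f(v, c)` is the functional
`g ↦ E[g(U, W) g(V, W)] - (E g(U, W))²` evaluated at `g(u, w) = f(x u + y w)` with
`(x, y) = (√(v - c), √c)`. For `|x|, |y| ≤ s`, the growth bound on `f`, and the one on `f'` through
the mean value theorem, dominate `g` and its variation in `(x, y)` by multiples of the weight
`(1 + |u|)^p (1 + |w|)^p`, whose Gaussian moments are finite. Hence the functional is Lipschitz
in `(x, y)`, with constant of order `K² (1 + s^p) (1 + s^(p-1))`. Taking `s = √(max v v')`,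
`(1 + s^p) (1 + s^(p-1)) ≤ 3 (1 + s^(2p-1))` produces the factor `1 + v^(p-1/2) + v'^(p-1/2)`, and
`|√a - √b| ≤ √|a - b|` turns the Lipschitz bound in `(x, y)` into the Hölder bound in `(v, c)`.
-/

open MeasureTheory ProbabilityTheory

/-- `Cov(f(X), f(Y))` for a centered bivariate Gaussian pair with common variance `v`
and covariance `c ∈ [0, v]`, via the representation `X = √(v-c)·U + √c·W`,
`Y = √(v-c)·V + √c·W` with `U, V, W` independent standard normals. -/
noncomputable def rhoCov (f : ℝ → ℝ) (v c : ℝ) : ℝ :=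
  rhoTilde f (Real.sqrt (v - c)) (Real.sqrt c)

open Real Function

lemma abs_sqrt_sub_sqrt_le {a b : ℝ} (ha : 0 ≤ a) (hb : 0 ≤ b) : |√a - √b| ≤ √|a - b| := by
  refine abs_le_sqrt ?_
  have hprod : (√a - √b) * (√a + √b) = a - b := by
    linear_combination sq_sqrt ha - sq_sqrt hb
  have hsum : |√a - √b| ≤ √a + √b := by
    simpa only [abs_of_nonneg (sqrt_nonneg _)] using abs_sub √a √b
  calc (√a - √b) ^ 2 = |√a - √b| * |√a - √b| := by rw [sq, abs_mul_abs_self]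
    _ ≤ |√a - √b| * (√a + √b) := mul_le_mul_of_nonneg_left hsum (abs_nonneg _)
    _ = |a - b| := by
      rw [← hprod, abs_mul, abs_of_nonneg (add_nonneg (sqrt_nonneg a) (sqrt_nonneg b))]

lemma sqrt_add_le_add_sqrt {a b : ℝ} (ha : 0 ≤ a) (hb : 0 ≤ b) : √(a + b) ≤ √a + √b := by
  have := abs_sqrt_sub_sqrt_le (add_nonneg ha hb) ha
  rw [add_sub_cancel_left, abs_of_nonneg hb] at this
  linarith [le_abs_self (√(a + b) - √a)]

lemma abs_mul_sub_mul_le (x y x' y' : ℝ) :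
    |x * y - x' * y'| ≤ |x - x'| * |y| + |x'| * |y - y'| :=
  calc |x * y - x' * y'| = |(x - x') * y + x' * (y - y')| := by ring_nf
    _ ≤ |(x - x') * y| + |x' * (y - y')| := abs_add_le _ _
    _ = |x - x'| * |y| + |x'| * |y - y'| := by rw [abs_mul, abs_mul]

/-- `Cov(g(U, W), g(V, W))` for independent `U, V, W` with law `μ`. -/
noncomputable def sharedCov {α : Type*} [MeasurableSpace α] (μ : Measure α) (g : α → α → ℝ) : ℝ :=
  (∫ q : α × α × α, g q.1 q.2.2 * g q.2.1 q.2.2 ∂(μ.prod (μ.prod μ))) -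
  (∫ q : α × α, g q.1 q.2 ∂(μ.prod μ)) * (∫ q : α × α, g q.1 q.2 ∂(μ.prod μ))

lemma rhoTilde_eq_sharedCov (f : ℝ → ℝ) (x y : ℝ) :
    rhoTilde f x y = sharedCov (gaussianReal 0 1) fun u w => f (x * u + y * w) := rfl

section SharedCov

variable {α : Type*} {W : α → ℝ}

lemma abs_sharedCov_integrand_sub_le {g h : α → α → ℝ} {a b : ℝ}
    (hga : ∀ u w, |g u w| ≤ a * (W u * W w)) (hha : ∀ u w, |h u w| ≤ a * (W u * W w))
    (hgh : ∀ u w, |g u w - h u w| ≤ b * (W u * W w)) (u v w : α) :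
    |g u w * g v w - h u w * h v w| ≤ 2 * a * b * (W u * (W v * W w ^ 2)) := by
  have hb : 0 ≤ b * (W u * W w) := (abs_nonneg _).trans (hgh u w)
  have ha : 0 ≤ a * (W u * W w) := (abs_nonneg _).trans (hha u w)
  calc |g u w * g v w - h u w * h v w|
      ≤ |g u w - h u w| * |g v w| + |h u w| * |g v w - h v w| := abs_mul_sub_mul_le _ _ _ _
    _ ≤ b * (W u * W w) * (a * (W v * W w)) + a * (W u * W w) * (b * (W v * W w)) := by
      gcongr
      exacts [hgh u w, hga v w, hha u w, hgh v w]
    _ = 2 * a * b * (W u * (W v * W w ^ 2)) := by ring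

variable [MeasurableSpace α] {μ : Measure α}

lemma measurable_sharedCov_integrand {g : α → α → ℝ} (hg : Measurable (uncurry g)) :
    Measurable fun q : α × α × α => g q.1 q.2.2 * g q.2.1 q.2.2 :=
  (hg.comp (measurable_fst.prodMk measurable_snd.snd)).mul
    (hg.comp (measurable_snd.fst.prodMk measurable_snd.snd))

lemma integrable_sharedCov_integrand {g : α → α → ℝ} {a : ℝ} (hg : Measurable (uncurry g))
    (hW : Integrable W μ) (hW2 : Integrable (fun u => W u ^ 2) μ)
    (hga : ∀ u w, |g u w| ≤ a * (W u * W w)) :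
    Integrable (fun q : α × α × α => g q.1 q.2.2 * g q.2.1 q.2.2) (μ.prod (μ.prod μ)) := by
  refine ((hW.mul_prod (hW.mul_prod hW2)).const_mul (a ^ 2)).mono'
    (measurable_sharedCov_integrand hg).aestronglyMeasurable (ae_of_all _ fun q => ?_)
  calc ‖g q.1 q.2.2 * g q.2.1 q.2.2‖ = |g q.1 q.2.2| * |g q.2.1 q.2.2| := abs_mul _ _
    _ ≤ a * (W q.1 * W q.2.2) * (a * (W q.2.1 * W q.2.2)) :=
      mul_le_mul (hga _ _) (hga _ _) (abs_nonneg _) ((abs_nonneg _).trans (hga _ _))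
    _ = a ^ 2 * (W q.1 * (W q.2.1 * W q.2.2 ^ 2)) := by ring

lemma integrable_prod_of_abs_le {F : α → α → ℝ} {c : ℝ} (hF : Measurable (uncurry F))
    (hW : Integrable W μ) (hFc : ∀ u w, |F u w| ≤ c * (W u * W w)) :
    Integrable (fun q : α × α => F q.1 q.2) (μ.prod μ) :=
  ((hW.mul_prod hW).const_mul c).mono' hF.aestronglyMeasurable (ae_of_all _ fun q => hFc q.1 q.2)

variable [SFinite μ]

lemma abs_integral_prod_le {F : α → α → ℝ} {c : ℝ} (hW : Integrable W μ)
    (hFc : ∀ u w, |F u w| ≤ c * (W u * W w)) :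
    |∫ q : α × α, F q.1 q.2 ∂(μ.prod μ)| ≤ c * (∫ u, W u ∂μ) ^ 2 := by
  have := norm_integral_le_of_norm_le (f := fun q : α × α => F q.1 q.2)
    ((hW.mul_prod hW).const_mul c) (ae_of_all _ fun q => hFc q.1 q.2)
  rwa [integral_const_mul, integral_prod_mul, ← sq] at this

theorem abs_sharedCov_sub_le {g h : α → α → ℝ} {a b : ℝ}
    (hg : Measurable (uncurry g)) (hh : Measurable (uncurry h))
    (hW : Integrable W μ) (hW2 : Integrable (fun u => W u ^ 2) μ)
    (hga : ∀ u w, |g u w| ≤ a * (W u * W w)) (hha : ∀ u w, |h u w| ≤ a * (W u * W w))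
    (hgh : ∀ u w, |g u w - h u w| ≤ b * (W u * W w)) :
    |sharedCov μ g - sharedCov μ h| ≤
      2 * a * b * ((∫ u, W u ∂μ) ^ 2 * ∫ u, W u ^ 2 ∂μ + (∫ u, W u ∂μ) ^ 4) := by
  set M := ∫ u, W u ∂μ
  set Tg := ∫ q : α × α × α, g q.1 q.2.2 * g q.2.1 q.2.2 ∂(μ.prod (μ.prod μ))
  set Th := ∫ q : α × α × α, h q.1 q.2.2 * h q.2.1 q.2.2 ∂(μ.prod (μ.prod μ))
  set Ig := ∫ q : α × α, g q.1 q.2 ∂(μ.prod μ)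
  set Ih := ∫ q : α × α, h q.1 q.2 ∂(μ.prod μ)
  have hT : |Tg - Th| ≤ 2 * a * b * (M ^ 2 * ∫ u, W u ^ 2 ∂μ) := by
    rw [← integral_sub (integrable_sharedCov_integrand hg hW hW2 hga)
      (integrable_sharedCov_integrand hh hW hW2 hha)]
    have := norm_integral_le_of_norm_le
      (f := fun q : α × α × α => g q.1 q.2.2 * g q.2.1 q.2.2 - h q.1 q.2.2 * h q.2.1 q.2.2)
      ((hW.mul_prod (hW.mul_prod hW2)).const_mul (2 * a * b))
      (ae_of_all _ fun q => abs_sharedCov_integrand_sub_le hga hha hgh q.1 q.2.1 q.2.2)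
    rw [integral_const_mul, integral_prod_mul W (fun r : α × α => W r.1 * W r.2 ^ 2),
      integral_prod_mul W (fun u => W u ^ 2)] at this
    exact this.trans_eq (by ring)
  have hIgh : |Ig - Ih| ≤ b * M ^ 2 := by
    rw [← integral_sub (integrable_prod_of_abs_le hg hW hga) (integrable_prod_of_abs_le hh hW hha)]
    exact abs_integral_prod_le hW hgh
  have hIg : |Ig| ≤ a * M ^ 2 := abs_integral_prod_le hW hga
  have hIh : |Ih| ≤ a * M ^ 2 := abs_integral_prod_le hW hha
  have hI : |Ig * Ig - Ih * Ih| ≤ 2 * a * b * M ^ 4 := by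
    have hb : 0 ≤ b * M ^ 2 := (abs_nonneg _).trans hIgh
    have ha : 0 ≤ a * M ^ 2 := (abs_nonneg _).trans hIh
    calc |Ig * Ig - Ih * Ih| ≤ |Ig - Ih| * |Ig| + |Ih| * |Ig - Ih| := abs_mul_sub_mul_le _ _ _ _
      _ ≤ b * M ^ 2 * (a * M ^ 2) + a * M ^ 2 * (b * M ^ 2) := by gcongr
      _ = 2 * a * b * M ^ 4 := by ring
  calc |sharedCov μ g - sharedCov μ h| = |(Tg - Th) - (Ig * Ig - Ih * Ih)| := by
        show |(Tg - Ig * Ig) - (Th - Ih * Ih)| = _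
        ring_nf
    _ ≤ |Tg - Th| + |Ig * Ig - Ih * Ih| := abs_sub _ _
    _ ≤ _ := by linarith

end SharedCov

section Growth

variable {f : ℝ → ℝ} {K p : ℝ}

lemma abs_mul_add_mul_le {a b s : ℝ} (ha : |a| ≤ s) (hb : |b| ≤ s) (u w : ℝ) :
    |a * u + b * w| ≤ s * (|u| + |w|) :=
  calc |a * u + b * w| ≤ |a| * |u| + |b| * |w| := by
        rw [← abs_mul, ← abs_mul]; exact abs_add_le _ _
    _ ≤ s * |u| + s * |w| := by gcongr
    _ = s * (|u| + |w|) := by ring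

lemma one_add_abs_add_abs_rpow_le (hp : 0 ≤ p) (u w : ℝ) :
    (1 + (|u| + |w|)) ^ p ≤ (1 + |u|) ^ p * (1 + |w|) ^ p := by
  rw [← mul_rpow (by positivity) (by positivity)]
  gcongr
  nlinarith [mul_nonneg (abs_nonneg u) (abs_nonneg w)]

lemma abs_apply_le_of_abs_le_mul (hp : 0 ≤ p) (hK : 0 ≤ K)
    (hfK : ∀ z, |f z| ≤ K * (1 + |z| ^ p)) {z s t : ℝ} (hs : 0 ≤ s) (ht : 0 ≤ t)
    (hz : |z| ≤ s * t) :
    |f z| ≤ K * (1 + s ^ p) * (1 + t) ^ p := by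
  have h1 : 1 ≤ (1 + t) ^ p := one_le_rpow (by linarith) hp
  have h2 : |z| ^ p ≤ s ^ p * (1 + t) ^ p := by
    rw [← mul_rpow hs (by linarith)]
    exact rpow_le_rpow (abs_nonneg z) (hz.trans (by nlinarith)) hp
  calc |f z| ≤ K * (1 + |z| ^ p) := hfK z
    _ ≤ K * ((1 + t) ^ p + s ^ p * (1 + t) ^ p) := by gcongr
    _ = K * (1 + s ^ p) * (1 + t) ^ p := by ring

lemma abs_sub_le_of_abs_deriv_le (hp : 1 ≤ p) (hK : 0 ≤ K) (hf : Differentiable ℝ f)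
    (hfK' : ∀ z, |deriv f z| ≤ K * (1 + |z| ^ (p - 1))) {z z' m : ℝ} (hz : |z| ≤ m)
    (hz' : |z'| ≤ m) :
    |f z - f z'| ≤ K * (1 + m ^ (p - 1)) * |z - z'| := by
  refine (convex_closedBall (0 : ℝ) m).norm_image_sub_le_of_norm_deriv_le (fun x _ => hf x)
    (fun x hx => (hfK' x).trans ?_) (mem_closedBall_zero_iff.2 hz') (mem_closedBall_zero_iff.2 hz)
  have : |x| ≤ m := mem_closedBall_zero_iff.1 hx
  gcongr

lemma abs_apply_sub_apply_le_of_abs_le_mul (hp : 1 ≤ p) (hK : 0 ≤ K) (hf : Differentiable ℝ f)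
    (hfK' : ∀ z, |deriv f z| ≤ K * (1 + |z| ^ (p - 1))) {z z' s t δ : ℝ} (hs : 0 ≤ s)
    (ht : 0 ≤ t) (hδ : 0 ≤ δ) (hz : |z| ≤ s * t) (hz' : |z'| ≤ s * t) (hzz' : |z - z'| ≤ δ * t) :
    |f z - f z'| ≤ K * (1 + s ^ (p - 1)) * δ * (1 + t) ^ p := by
  have h1 : t ≤ (1 + t) ^ p := by
    linarith [self_le_rpow_of_one_le (by linarith : 1 ≤ 1 + t) hp]
  have h2 : (s * t) ^ (p - 1) * t ≤ s ^ (p - 1) * (1 + t) ^ p := by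
    have : t ^ (p - 1) ≤ (1 + t) ^ (p - 1) := by gcongr; linarith
    calc (s * t) ^ (p - 1) * t = s ^ (p - 1) * (t ^ (p - 1) * t) := by
          rw [mul_rpow hs ht]; ring
      _ ≤ s ^ (p - 1) * ((1 + t) ^ (p - 1) * (1 + t)) := by gcongr; linarith
      _ = s ^ (p - 1) * (1 + t) ^ p := by
          rw [← rpow_add_one (by linarith), sub_add_cancel]
  calc |f z - f z'| ≤ K * (1 + (s * t) ^ (p - 1)) * |z - z'| :=
        abs_sub_le_of_abs_deriv_le hp hK hf hfK' hz hz'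
    _ ≤ K * (1 + (s * t) ^ (p - 1)) * (δ * t) := by gcongr
    _ = K * δ * (t + (s * t) ^ (p - 1) * t) := by ring
    _ ≤ K * δ * ((1 + t) ^ p + s ^ (p - 1) * (1 + t) ^ p) := by gcongr
    _ = K * (1 + s ^ (p - 1)) * δ * (1 + t) ^ p := by ring

lemma abs_apply_mul_add_mul_le (hp : 0 ≤ p) (hK : 0 ≤ K)
    (hfK : ∀ z, |f z| ≤ K * (1 + |z| ^ p)) {x y s : ℝ} (hx : |x| ≤ s) (hy : |y| ≤ s)
    (u w : ℝ) :
    |f (x * u + y * w)| ≤ K * (1 + s ^ p) * ((1 + |u|) ^ p * (1 + |w|) ^ p) := by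
  have hs : 0 ≤ s := (abs_nonneg x).trans hx
  refine (abs_apply_le_of_abs_le_mul hp hK hfK hs (by positivity)
    (abs_mul_add_mul_le hx hy u w)).trans ?_
  gcongr
  exact one_add_abs_add_abs_rpow_le hp u w

lemma abs_apply_mul_add_mul_sub_le (hp : 1 ≤ p) (hK : 0 ≤ K) (hf : Differentiable ℝ f)
    (hfK' : ∀ z, |deriv f z| ≤ K * (1 + |z| ^ (p - 1))) {x y x' y' s : ℝ} (hx : |x| ≤ s)
    (hy : |y| ≤ s) (hx' : |x'| ≤ s) (hy' : |y'| ≤ s) (u w : ℝ) :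
    |f (x * u + y * w) - f (x' * u + y' * w)| ≤
      K * (1 + s ^ (p - 1)) * (|x - x'| + |y - y'|) * ((1 + |u|) ^ p * (1 + |w|) ^ p) := by
  have hs : 0 ≤ s := (abs_nonneg x).trans hx
  have hdiff : |(x * u + y * w) - (x' * u + y' * w)| ≤ (|x - x'| + |y - y'|) * (|u| + |w|) := by
    rw [show (x * u + y * w) - (x' * u + y' * w) = (x - x') * u + (y - y') * w by ring]
    exact abs_mul_add_mul_le (le_add_of_nonneg_right (abs_nonneg _))
      (le_add_of_nonneg_left (abs_nonneg _)) u w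
  refine (abs_apply_sub_apply_le_of_abs_le_mul hp hK hf hfK' hs (by positivity) (by positivity)
    (abs_mul_add_mul_le hx hy u w) (abs_mul_add_mul_le hx' hy' u w) hdiff).trans ?_
  gcongr
  exact one_add_abs_add_abs_rpow_le (by linarith) u w

end Growth

lemma integrable_one_add_abs_rpow_gaussianReal {r : ℝ} (hr : 0 ≤ r) (m : ℝ) (v : NNReal) :
    Integrable (fun u => (1 + |u|) ^ r) (gaussianReal m v) := by
  have := ((memLp_const (1 : ℝ)).add
    (memLp_id_gaussianReal (μ := m) (v := v) r.toNNReal).norm).integrable_norm_rpow'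
  refine this.congr (ae_of_all _ fun u => ?_)
  simp only [Pi.add_apply, id, ENNReal.coe_toReal, Real.coe_toNNReal _ hr, Real.norm_eq_abs,
    abs_of_nonneg (add_nonneg zero_le_one (abs_nonneg u))]

theorem abs_rhoTilde_sub_le {f : ℝ → ℝ} {K p : ℝ} (hp : 1 ≤ p) (hK : 0 ≤ K)
    (hf : ContDiff ℝ 1 f) (hfK : ∀ z, |f z| ≤ K * (1 + |z| ^ p))
    (hfK' : ∀ z, |deriv f z| ≤ K * (1 + |z| ^ (p - 1))) {x y x' y' s : ℝ} (hx : |x| ≤ s)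
    (hy : |y| ≤ s) (hx' : |x'| ≤ s) (hy' : |y'| ≤ s) :
    |rhoTilde f x y - rhoTilde f x' y'| ≤
      2 * (K * (1 + s ^ p)) * (K * (1 + s ^ (p - 1)) * (|x - x'| + |y - y'|)) *
        ((∫ u, (1 + |u|) ^ p ∂gaussianReal 0 1) ^ 2 * ∫ u, ((1 + |u|) ^ p) ^ 2 ∂gaussianReal 0 1 +
          (∫ u, (1 + |u|) ^ p ∂gaussianReal 0 1) ^ 4) := by
  have hmeas (a b : ℝ) : Measurable (uncurry fun u w => f (a * u + b * w)) :=
    (hf.continuous.comp (by fun_prop)).measurable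
  have hW2 : Integrable (fun u : ℝ => ((1 + |u|) ^ p) ^ 2) (gaussianReal 0 1) :=
    (integrable_one_add_abs_rpow_gaussianReal (r := p * (2 : ℕ)) (by positivity) 0 1).congr
      (ae_of_all _ fun u => rpow_mul_natCast (by positivity) p 2)
  rw [rhoTilde_eq_sharedCov, rhoTilde_eq_sharedCov]
  exact abs_sharedCov_sub_le (hmeas x y) (hmeas x' y')
    (integrable_one_add_abs_rpow_gaussianReal (by positivity) 0 1) hW2
    (abs_apply_mul_add_mul_le (by positivity) hK hfK hx hy)
    (abs_apply_mul_add_mul_le (by positivity) hK hfK hx' hy')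
    (abs_apply_mul_add_mul_sub_le hp hK (hf.differentiable one_ne_zero) hfK' hx hy hx' hy')

lemma rpow_le_one_add_rpow {s r R : ℝ} (hs : 0 ≤ s) (hr : 0 ≤ r) (hrR : r ≤ R) :
    s ^ r ≤ 1 + s ^ R := by
  rcases le_total s 1 with h | h
  · linarith [rpow_le_one hs h hr, rpow_nonneg hs R]
  · linarith [rpow_le_rpow_of_exponent_le h hrR]

lemma one_add_rpow_mul_one_add_rpow_sub_one_le {s p : ℝ} (hs : 0 ≤ s) (hp : 1 ≤ p) :
    (1 + s ^ p) * (1 + s ^ (p - 1)) ≤ 3 * (1 + s ^ (2 * p - 1)) := by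
  have hprod : s ^ p * s ^ (p - 1) = s ^ (2 * p - 1) := by
    rw [← rpow_add' hs (by linarith)]; ring_nf
  have h1 := rpow_le_one_add_rpow hs (by linarith : 0 ≤ p) (by linarith : p ≤ 2 * p - 1)
  have h2 := rpow_le_one_add_rpow hs (by linarith : 0 ≤ p - 1) (by linarith : p - 1 ≤ 2 * p - 1)
  nlinarith

lemma sqrt_max_rpow_le_add {v v' r : ℝ} (hv : 0 ≤ v) (hv' : 0 ≤ v') (hr : 0 ≤ r) :
    √(max v v') ^ r ≤ v ^ (r / 2) + v' ^ (r / 2) := by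
  rw [← rpow_div_two_eq_sqrt r (le_max_of_le_left hv), rpow_max hv hv' (by positivity)]
  exact max_le_add_of_nonneg (rpow_nonneg hv _) (rpow_nonneg hv' _)

lemma abs_sqrt_sub_add_abs_sqrt_sub_le {v v' c c' : ℝ} (hc : 0 ≤ c) (hcv : c ≤ v) (hc' : 0 ≤ c')
    (hc'v' : c' ≤ v') :
    |√(v - c) - √(v' - c')| + |√c - √c'| ≤ 2 * (√|v - v'| + √|c - c'|) := by
  have h1 := abs_sqrt_sub_sqrt_le hc hc'
  have h2 : |√(v - c) - √(v' - c')| ≤ √|v - v'| + √|c - c'| :=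
    calc |√(v - c) - √(v' - c')| ≤ √|(v - c) - (v' - c')| :=
          abs_sqrt_sub_sqrt_le (sub_nonneg.2 hcv) (sub_nonneg.2 hc'v')
      _ ≤ √(|v - v'| + |c - c'|) := by
          rw [show (v - c) - (v' - c') = (v - v') - (c - c') by ring]
          exact sqrt_le_sqrt (abs_sub _ _)
      _ ≤ √|v - v'| + √|c - c'| := sqrt_add_le_add_sqrt (abs_nonneg _) (abs_nonneg _)
  linarith [sqrt_nonneg |v - v'|]

theorem stmt_14 (p K : ℝ) (hp : 2 ≤ p) :
    ∃ C : ℝ, ∀ f : ℝ → ℝ, ContDiff ℝ 1 f →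
      (∀ z, |f z| ≤ K * (1 + |z| ^ p)) →
      (∀ z, |deriv f z| ≤ K * (1 + |z| ^ (p - 1))) →
      ∀ v v' c c' : ℝ, 0 ≤ v → 0 ≤ v' → 0 ≤ c → c ≤ v → 0 ≤ c' → c' ≤ v' →
        |rhoCov f v c - rhoCov f v' c'| ≤
          C * (1 + v ^ (p - 1 / 2) + v' ^ (p - 1 / 2))
            * (Real.sqrt |v - v'| + Real.sqrt |c - c'|) := by
  set M := ∫ u, (1 + |u|) ^ p ∂gaussianReal 0 1
  set M₂ := ∫ u, ((1 + |u|) ^ p) ^ 2 ∂gaussianReal 0 1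
  refine ⟨12 * K ^ 2 * (M ^ 2 * M₂ + M ^ 4),
    fun f hf hfK hfK' v v' c c' hv hv' hc hcv hc' hc'v' => ?_⟩
  have hK : 0 ≤ K := nonneg_of_mul_nonneg_left ((abs_nonneg _).trans (hfK 0)) (by positivity)
  set s := √(max v v')
  have hle_s {a : ℝ} (h : a ≤ max v v') : |√a| ≤ s := by
    rw [abs_of_nonneg (sqrt_nonneg a)]; exact sqrt_le_sqrt h
  have hρ := abs_rhoTilde_sub_le (by linarith) hK hf hfK hfK'
    (hle_s (by linarith [le_max_left v v'] : v - c ≤ max v v'))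
    (hle_s (by linarith [le_max_left v v'] : c ≤ max v v'))
    (hle_s (by linarith [le_max_right v v'] : v' - c' ≤ max v v'))
    (hle_s (by linarith [le_max_right v v'] : c' ≤ max v v'))
  have hweight :
      (1 + s ^ p) * (1 + s ^ (p - 1)) ≤ 3 * (1 + v ^ (p - 1 / 2) + v' ^ (p - 1 / 2)) := by
    have := sqrt_max_rpow_le_add hv hv' (by linarith : 0 ≤ 2 * p - 1)
    rw [show (2 * p - 1) / 2 = p - 1 / 2 by ring] at this
    linarith [one_add_rpow_mul_one_add_rpow_sub_one_le (sqrt_nonneg (max v v'))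
      (by linarith : 1 ≤ p)]
  have hδ := abs_sqrt_sub_add_abs_sqrt_sub_le hc hcv hc' hc'v'
  calc |rhoCov f v c - rhoCov f v' c'|
      ≤ 2 * K ^ 2 * (M ^ 2 * M₂ + M ^ 4) * ((1 + s ^ p) * (1 + s ^ (p - 1))) *
          (|√(v - c) - √(v' - c')| + |√c - √c'|) := hρ.trans_eq (by ring)
    _ ≤ 2 * K ^ 2 * (M ^ 2 * M₂ + M ^ 4) * (3 * (1 + v ^ (p - 1 / 2) + v' ^ (p - 1 / 2))) *
          (2 * (√|v - v'| + √|c - c'|)) := by gcongr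
    _ = _ := by ring
end
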